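/- For d ∈ (0,4) and ζ = d/4, the subtracted one-loop cap integrals converge: I₁ = ∫_{[0,1]³} (a₁a₂b₂)^{ζ−1}[(a₁+a₂)(1+b₂)+b₂]^{−d/2} da₁da₂db₂ and I₂ = (d/2)∫_0^1 du ∫_{[0,1]³} (a₂b₁b₂)^{ζ−1} b₁b₂ [(1+a₂)(b₁+b₂)+u b₁b₂]^{−d/2−1} da₂db₁db₂ are both finite. -/

import Mathlib

/-!
Each integrand is dominated on its cube by a product of one-variable powers with exponents
greater than `-1`. For the first, the denominator `B = (a₁ + a₂)(1 + b₂) + b₂` exceeds each of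
`a₁, a₂, b₂`, so `B ^ (-d/2) ≤ (a₁a₂b₂) ^ (-d/6)` and the integrand is at most
`(a₁a₂b₂) ^ (d/12 - 1)`. For the second, the denominator exceeds `b₁ + b₂`, whose square
exceeds `b₁b₂`, and the integrand is at most `(d/2) a₂ ^ (d/4 - 1) (b₁b₂) ^ (-1/2)`.
-/

open MeasureTheory Real Set

theorem IntegrableOn.mul_prod {α β : Type*} [MeasureSpace α] [MeasureSpace β]
    [SFinite (volume : Measure α)] [SFinite (volume : Measure β)]
    {L : Type*} [NormedRing L] {f : α → L} {g : β → L} {s : Set α} {t : Set β}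
    (hf : IntegrableOn f s) (hg : IntegrableOn g t) :
    IntegrableOn (fun p : α × β => f p.1 * g p.2) (s ×ˢ t) := by
  rw [IntegrableOn, Measure.volume_eq_prod, ← Measure.prod_restrict]
  exact Integrable.mul_prod hf hg

theorem integrableOn_rpow_Ioc_zero_one {r : ℝ} (hr : -1 < r) :
    IntegrableOn (fun x : ℝ => x ^ r) (Ioc 0 1) := by
  rw [← intervalIntegrable_iff_integrableOn_Ioc_of_le zero_le_one]
  exact intervalIntegral.intervalIntegrable_rpow' hr

theorem integrableOn_rpow_mul_rpow_mul_rpow {r s t : ℝ} (hr : -1 < r) (hs : -1 < s)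
    (ht : -1 < t) :
    IntegrableOn (fun p : ℝ × ℝ × ℝ => p.1 ^ r * (p.2.1 ^ s * p.2.2 ^ t))
      (Ioc 0 1 ×ˢ Ioc 0 1 ×ˢ Ioc 0 1) :=
  IntegrableOn.mul_prod (integrableOn_rpow_Ioc_zero_one hr)
    (IntegrableOn.mul_prod (integrableOn_rpow_Ioc_zero_one hs) (integrableOn_rpow_Ioc_zero_one ht))

theorem Real.rpow_le_rpow_div_of_le_pow {P B s : ℝ} {n : ℕ} (hP : 0 < P) (hB : 0 ≤ B)
    (hn : 0 < n) (hPB : P ≤ B ^ n) (hs : s ≤ 0) : B ^ s ≤ P ^ (s / n) := by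
  have hroot : P ^ (n : ℝ)⁻¹ ≤ B :=
    (rpow_inv_le_iff_of_pos hP.le hB (by positivity)).2 (by rwa [rpow_natCast])
  calc B ^ s ≤ (P ^ (n : ℝ)⁻¹) ^ s := rpow_le_rpow_of_nonpos (by positivity) hroot hs
    _ = P ^ (s / n) := by rw [← rpow_mul hP.le, inv_mul_eq_div]

theorem first_cap_integrand_le_rpow_prod {d a b c : ℝ} (hd : 0 ≤ d) (ha : 0 < a) (hb : 0 < b)
    (hc : 0 < c) :
    (a * b * c) ^ (d / 4 - 1) * ((a + b) * (1 + c) + c) ^ (-(d / 2))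
      ≤ a ^ (d / 12 - 1) * (b ^ (d / 12 - 1) * c ^ (d / 12 - 1)) := by
  set B := (a + b) * (1 + c) + c
  have hP : 0 < a * b * c := by positivity
  have hsum : a + b + c ≤ B := by nlinarith
  have hcube : a * b * c ≤ B ^ 3 := by
    calc a * b * c ≤ B * B * B := by gcongr <;> linarith
      _ = B ^ 3 := by ring
  calc (a * b * c) ^ (d / 4 - 1) * B ^ (-(d / 2))
      ≤ (a * b * c) ^ (d / 4 - 1) * (a * b * c) ^ (-(d / 2) / (3 : ℕ)) := by
        gcongr
        exact rpow_le_rpow_div_of_le_pow hP (by linarith) (by norm_num) hcube (by linarith)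
    _ = (a * b * c) ^ (d / 12 - 1) := by
        rw [← rpow_add hP]; congr 1; push_cast; ring
    _ = a ^ (d / 12 - 1) * (b ^ (d / 12 - 1) * c ^ (d / 12 - 1)) := by
        rw [mul_rpow (by positivity) hc.le, mul_rpow ha.le hb.le, mul_assoc]

theorem second_cap_integrand_le_rpow_prod {d u a b c : ℝ} (hd : 0 ≤ d) (hu : 0 ≤ u)
    (ha : 0 < a) (hb : 0 < b) (hc : 0 < c) :
    (a * b * c) ^ (d / 4 - 1) * (b * c) * ((1 + a) * (b + c) + u * b * c) ^ (-(d / 2) - 1)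
      ≤ a ^ (d / 4 - 1) * (b ^ (-(1 : ℝ) / 2) * c ^ (-(1 : ℝ) / 2)) := by
  set B := (1 + a) * (b + c) + u * b * c
  have hP : 0 < b * c := by positivity
  have hsum : b + c ≤ B := by nlinarith [mul_nonneg (mul_nonneg hu hb.le) hc.le]
  have hsq : b * c ≤ B ^ 2 := by nlinarith
  calc (a * b * c) ^ (d / 4 - 1) * (b * c) * B ^ (-(d / 2) - 1)
      ≤ (a * b * c) ^ (d / 4 - 1) * (b * c) * (b * c) ^ ((-(d / 2) - 1) / (2 : ℕ)) := by
        gcongr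
        exact rpow_le_rpow_div_of_le_pow hP (by linarith) (by norm_num) hsq (by linarith)
    _ = a ^ (d / 4 - 1) * (b * c) ^ ((d / 4 - 1) + 1 + (-(d / 2) - 1) / (2 : ℕ)) := by
        rw [mul_assoc a, mul_rpow ha.le hP.le, rpow_add hP, rpow_add hP, rpow_one]
        ring
    _ = a ^ (d / 4 - 1) * (b * c) ^ (-(1 : ℝ) / 2) := by
        congr 2; push_cast; ring
    _ = a ^ (d / 4 - 1) * (b ^ (-(1 : ℝ) / 2) * c ^ (-(1 : ℝ) / 2)) := by
        rw [mul_rpow hb.le hc.le]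

theorem subtracted_cap_integrals_finite_general (d : ℝ) (hd0 : 0 < d) :
    IntegrableOn
      (fun p : ℝ × ℝ × ℝ =>
        (p.1 * p.2.1 * p.2.2) ^ (d / 4 - 1)
          * ((p.1 + p.2.1) * (1 + p.2.2) + p.2.2) ^ (-(d / 2)))
      (Set.Ioc 0 1 ×ˢ Set.Ioc 0 1 ×ˢ Set.Ioc 0 1) ∧
    IntegrableOn
      (fun p : ℝ × ℝ × ℝ × ℝ =>
        d / 2 * ((p.2.1 * p.2.2.1 * p.2.2.2) ^ (d / 4 - 1) * (p.2.2.1 * p.2.2.2)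
          * ((1 + p.2.1) * (p.2.2.1 + p.2.2.2) + p.1 * p.2.2.1 * p.2.2.2)
              ^ (-(d / 2) - 1)))
      (Set.Icc 0 1 ×ˢ Set.Ioc 0 1 ×ˢ Set.Ioc 0 1 ×ˢ Set.Ioc 0 1) := by
  constructor
  · have hr : -1 < d / 12 - 1 := by linarith
    refine (integrableOn_rpow_mul_rpow_mul_rpow hr hr hr).integrable.mono' (by fun_prop)
      (ae_restrict_of_forall_mem (by measurability) ?_)
    rintro p ⟨⟨ha, -⟩, ⟨hb, -⟩, ⟨hc, -⟩⟩
    rw [norm_of_nonneg (by positivity)]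
    exact first_cap_integrand_le_rpow_prod hd0.le ha hb hc
  · have hr : -1 < d / 4 - 1 := by linarith
    have hhalf : (-1 : ℝ) < -1 / 2 := by norm_num
    have hdom := IntegrableOn.mul_prod (integrableOn_const (s := Icc (0 : ℝ) 1) (C := d / 2)
      (by simp)) (integrableOn_rpow_mul_rpow_mul_rpow hr hhalf hhalf)
    refine hdom.integrable.mono' (by fun_prop) (ae_restrict_of_forall_mem (by measurability) ?_)
    rintro p ⟨⟨hu, -⟩, ⟨ha, -⟩, ⟨hb, -⟩, ⟨hc, -⟩⟩
    rw [norm_of_nonneg (by positivity)]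
    exact mul_le_mul_of_nonneg_left (second_cap_integrand_le_rpow_prod hd0.le hu ha hb hc)
      (by positivity)

/-- For 0 < d < 4 and ζ = d/4, the subtracted one-loop cap integrals
I₁ = ∫_{[0,1]³} (a₁a₂b₂)^{ζ−1}[(a₁+a₂)(1+b₂)+b₂]^{−d/2} and
I₂ = (d/2)∫_0^1 du ∫_{[0,1]³} (a₂b₁b₂)^{ζ−1} b₁b₂ [(1+a₂)(b₁+b₂)+ub₁b₂]^{−d/2−1}
are both finite (the integrands are integrable on the respective cubes). -/
theorem subtracted_cap_integrals_finite (d : ℝ) (hd0 : 0 < d) (hd4 : d < 4) :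
    IntegrableOn
      (fun p : ℝ × ℝ × ℝ =>
        (p.1 * p.2.1 * p.2.2) ^ (d / 4 - 1)
          * ((p.1 + p.2.1) * (1 + p.2.2) + p.2.2) ^ (-(d / 2)))
      (Set.Ioc 0 1 ×ˢ Set.Ioc 0 1 ×ˢ Set.Ioc 0 1) ∧
    IntegrableOn
      (fun p : ℝ × ℝ × ℝ × ℝ =>
        d / 2 * ((p.2.1 * p.2.2.1 * p.2.2.2) ^ (d / 4 - 1) * (p.2.2.1 * p.2.2.2)
          * ((1 + p.2.1) * (p.2.2.1 + p.2.2.2) + p.1 * p.2.2.1 * p.2.2.2)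
              ^ (-(d / 2) - 1)))
      (Set.Icc 0 1 ×ˢ Set.Ioc 0 1 ×ˢ Set.Ioc 0 1 ×ˢ Set.Ioc 0 1) :=
  subtracted_cap_integrals_finite_general d hd0
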